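/- Let a ∈ ℝ, let I_f be an interval with least element a, nonempty interior, and I_f ⊂ [a,∞), let Ω ⊂ ℝ^m be a nonempty open set, let α = (α₁,…,α_m) ∈ (0,1]^m, let q_a ∈ Ω, and let f : Ω × I_f → ℝ^m be a Carathéodory function that is bounded on compacts and locally Lipschitz continuous in its first variable. Then the Caputo Cauchy problem ( _cD^{α_i}_{a+}[q_i] = f_i(q(·),·) a.e., q(a) = q_a ) has a local solution: there exist ε > 0 with [a,a+ε] ⊂ I_f and a continuous q : [a,a+ε] → Ω with q(a) = q_a such that q_i(t) = (q_a)_i + (1/Γ(α_i)) ∫_a^t (t−τ)^{α_i−1} f_i(q(τ),τ) dτ for every t ∈ [a,a+ε] and every i. -/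

import Mathlib

open MeasureTheory Set

/-- Left Riemann–Liouville fractional integral of order `α` with base point `a`
(for `α = 0` it is the identity). -/
noncomputable def rlInt (a α : ℝ) (q : ℝ → ℝ) (t : ℝ) : ℝ :=
  if α = 0 then q t else (1 / Real.Gamma α) * ∫ τ in a..t, (t - τ) ^ (α - 1) * q τ

/-- `I` is an interval with least element `a`, nonempty interior, and `I ⊆ [a,∞)`. -/
def IsIntervalFrom (a : ℝ) (I : Set ℝ) : Prop :=
  a ∈ I ∧ I ⊆ Set.Ici a ∧ (interior I).Nonempty ∧ I.OrdConnected

/-- `(q, I)` is a local solution of the Caputo Cauchy problem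
`_cD^{α_i}_{a+}[q_i] = F_i(q(·),·)` a.e., `q(a) = qa`, on the domain `Ω`:
`I ⊆ If` is an interval with least element `a` and nonempty interior, `q` is continuous
on `I` with values in `Ω` and `q(a) = qa`, and for each `i` the function
`I^{1-α_i}_{a+}[q_i - (qa)_i]` agrees a.e. on `I` with a locally absolutely continuous
function `t ↦ c + ∫_a^t h` whose derivative `h` (the Caputo fractional derivative of
`q_i`) equals `F_i(q(t), t)` for almost every `t ∈ I`. -/
def IsCaputoLocalSol (a : ℝ) (If : Set ℝ) {m : ℕ}
    (Ω : Set (EuclideanSpace ℝ (Fin m))) (α : Fin m → ℝ)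
    (qa : EuclideanSpace ℝ (Fin m))
    (F : EuclideanSpace ℝ (Fin m) → ℝ → EuclideanSpace ℝ (Fin m))
    (q : ℝ → EuclideanSpace ℝ (Fin m)) (I : Set ℝ) : Prop :=
  IsIntervalFrom a I ∧ I ⊆ If ∧ ContinuousOn q I ∧ (∀ t ∈ I, q t ∈ Ω) ∧ q a = qa ∧
  ∀ i, ∃ c : ℝ, ∃ h : ℝ → ℝ,
    (∀ b ∈ I, MeasureTheory.IntegrableOn h (Set.Icc a b)) ∧
    (∀ᵐ t ∂(MeasureTheory.volume.restrict I),
      rlInt a (1 - α i) (fun τ => q τ i - qa i) t = c + ∫ τ in a..t, h τ) ∧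
    (∀ᵐ t ∂(MeasureTheory.volume.restrict I), h t = F (q t) t i)

/-- `(q, I)` is a maximal local solution of the Caputo Cauchy problem:
every extension `(q', I')` of it satisfies `I' = I`. -/
def IsMaximalSol (a : ℝ) (If : Set ℝ) {m : ℕ}
    (Ω : Set (EuclideanSpace ℝ (Fin m))) (α : Fin m → ℝ)
    (qa : EuclideanSpace ℝ (Fin m))
    (F : EuclideanSpace ℝ (Fin m) → ℝ → EuclideanSpace ℝ (Fin m))
    (q : ℝ → EuclideanSpace ℝ (Fin m)) (I : Set ℝ) : Prop :=
  IsCaputoLocalSol a If Ω α qa F q I ∧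
  ∀ (q' : ℝ → EuclideanSpace ℝ (Fin m)) (I' : Set ℝ),
    IsCaputoLocalSol a If Ω α qa F q' I' → I ⊆ I' → Set.EqOn q' q I → I' = I

/-!
Choose a closed ball `B` around `qa` inside `Ω` and a short interval `[a, a + ε]` on which, for
almost every time, `F` is bounded by `M` and `L`-Lipschitz on `B`; the almost-everywhere
quantifier can be moved in front of `∀ x ∈ B` because `F` is continuous in `x` and `B` is
separable. For `0 < α ≤ 1` the Riemann–Liouville integral of a function bounded by `M` is bounded
by `M ε ^ α / Γ(α + 1)` and is Hölder continuous of order `α`, so the Picard operator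
`q ↦ qa + I^α[F(q, ·)]` maps `C([a, a + ε], B)` to itself and contracts with ratio
`L ∑ᵢ ε ^ αᵢ / Γ(αᵢ + 1) < 1`. Its fixed point is the solution. Measurability of
`τ ↦ F(q τ, τ)` comes from approximating `q` by simple functions with values in `Ω`.
-/

open Filter Topology

section KernelEstimates

variable {α : ℝ}

lemma intervalIntegrable_sub_rpow (hα : 0 < α) (t c d : ℝ) :
    IntervalIntegrable (fun τ => (t - τ) ^ (α - 1)) volume c d := by
  simpa using (intervalIntegral.intervalIntegrable_rpow' (a := t - c) (b := t - d)
    (r := α - 1) (by linarith)).comp_sub_left t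

lemma integral_sub_rpow (hα : 0 < α) (t c d : ℝ) :
    ∫ τ in c..d, (t - τ) ^ (α - 1) = ((t - c) ^ α - (t - d) ^ α) / α := by
  rw [intervalIntegral.integral_comp_sub_left (fun x => x ^ (α - 1)) t,
    integral_rpow (Or.inl (by linarith))]
  ring_nf

variable {c d t M : ℝ} {g : ℝ → ℝ}

lemma intervalIntegrable_sub_rpow_mul (hα : 0 < α) (hcd : c ≤ d) (hdt : d ≤ t)
    (hg : AEStronglyMeasurable g (volume.restrict (Ioc c d)))
    (hgM : ∀ᵐ τ ∂volume.restrict (Ioc c d), |g τ| ≤ M) :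
    IntervalIntegrable (fun τ => (t - τ) ^ (α - 1) * g τ) volume c d := by
  rw [intervalIntegrable_iff_integrableOn_Ioc_of_le hcd]
  have hk := (intervalIntegrable_iff_integrableOn_Ioc_of_le hcd).1
    (intervalIntegrable_sub_rpow hα t c d)
  refine Integrable.mono' (hk.const_mul M)
    ((by fun_prop : Measurable fun τ : ℝ => (t - τ) ^ (α - 1)).aestronglyMeasurable.mul hg) ?_
  filter_upwards [hgM, ae_restrict_mem measurableSet_Ioc] with τ hτ hmem
  have hk0 : 0 ≤ (t - τ) ^ (α - 1) := Real.rpow_nonneg (by linarith [hmem.2]) _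
  rw [norm_mul, Real.norm_eq_abs, Real.norm_eq_abs, abs_of_nonneg hk0, mul_comm M]
  exact mul_le_mul_of_nonneg_left hτ hk0

lemma abs_integral_sub_rpow_mul_le (hα : 0 < α) (hcd : c ≤ d) (hdt : d ≤ t)
    (hgM : ∀ᵐ τ ∂volume.restrict (Ioc c d), |g τ| ≤ M) :
    |∫ τ in c..d, (t - τ) ^ (α - 1) * g τ| ≤ M * ((t - c) ^ α - (t - d) ^ α) / α := by
  rw [mul_div_assoc, ← integral_sub_rpow hα, ← intervalIntegral.integral_const_mul,
    ← Real.norm_eq_abs]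
  refine intervalIntegral.norm_integral_le_of_norm_le hcd ?_
    ((intervalIntegrable_sub_rpow hα t c d).const_mul M)
  rw [← ae_restrict_iff' measurableSet_Ioc]
  filter_upwards [hgM, ae_restrict_mem measurableSet_Ioc] with τ hτ hmem
  have hk0 : 0 ≤ (t - τ) ^ (α - 1) := Real.rpow_nonneg (by linarith [hmem.2]) _
  rw [norm_mul, Real.norm_eq_abs, Real.norm_eq_abs, abs_of_nonneg hk0, mul_comm M]
  exact mul_le_mul_of_nonneg_left hτ hk0

end KernelEstimates

section Holder

variable {α a M : ℝ} {g : ℝ → ℝ}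

-- the kernel decreases in `t` because `α ≤ 1`, so the difference of kernels has a sign
lemma abs_integral_sub_rpow_sub_mul_le (hα0 : 0 < α) (hα1 : α ≤ 1) (hM : 0 ≤ M)
    {t₁ t₂ : ℝ} (h1 : a ≤ t₁) (h12 : t₁ ≤ t₂)
    (hgM : ∀ᵐ τ ∂volume.restrict (Ioc a t₁), |g τ| ≤ M) :
    |∫ τ in a..t₁, ((t₂ - τ) ^ (α - 1) - (t₁ - τ) ^ (α - 1)) * g τ|
      ≤ M * (t₂ - t₁) ^ α / α := by
  rw [← Real.norm_eq_abs]
  refine (intervalIntegral.norm_integral_le_of_norm_le h1 (g := fun τ =>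
      M * ((t₁ - τ) ^ (α - 1) - (t₂ - τ) ^ (α - 1))) ?_ ?_).trans ?_
  · rw [← ae_restrict_iff' measurableSet_Ioc]
    filter_upwards [hgM, ae_restrict_mem measurableSet_Ioc,
      ae_restrict_of_ae (Measure.ae_ne volume t₁)] with τ hτ hmem hne
    have hk : (t₂ - τ) ^ (α - 1) ≤ (t₁ - τ) ^ (α - 1) :=
      Real.rpow_le_rpow_of_nonpos (sub_pos.2 (hmem.2.lt_of_ne hne)) (by linarith)
        (by linarith)
    rw [Real.norm_eq_abs, abs_mul, abs_sub_comm, abs_of_nonneg (sub_nonneg.2 hk), mul_comm M]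
    exact mul_le_mul_of_nonneg_left hτ (sub_nonneg.2 hk)
  · exact ((intervalIntegrable_sub_rpow hα0 t₁ a t₁).sub
      (intervalIntegrable_sub_rpow hα0 t₂ a t₁)).const_mul M
  · rw [intervalIntegral.integral_const_mul, intervalIntegral.integral_sub
      (intervalIntegrable_sub_rpow hα0 t₁ a t₁) (intervalIntegrable_sub_rpow hα0 t₂ a t₁),
      integral_sub_rpow hα0, integral_sub_rpow hα0, sub_self, Real.zero_rpow hα0.ne',
      mul_div_assoc, div_sub_div_same]
    have hmono : (t₁ - a) ^ α ≤ (t₂ - a) ^ α :=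
      Real.rpow_le_rpow (by linarith) (by linarith) hα0.le
    exact mul_le_mul_of_nonneg_left (div_le_div_of_nonneg_right (by linarith) hα0.le) hM

lemma abs_integral_sub_rpow_mul_sub_le (hα0 : 0 < α) (hα1 : α ≤ 1) (hM : 0 ≤ M)
    {t₁ t₂ : ℝ} (h1 : a ≤ t₁) (h12 : t₁ ≤ t₂)
    (hg : AEStronglyMeasurable g (volume.restrict (Ioc a t₂)))
    (hgM : ∀ᵐ τ ∂volume.restrict (Ioc a t₂), |g τ| ≤ M) :
    |(∫ τ in a..t₂, (t₂ - τ) ^ (α - 1) * g τ) - ∫ τ in a..t₁, (t₁ - τ) ^ (α - 1) * g τ|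
      ≤ 2 * M * (t₂ - t₁) ^ α / α := by
  have sub1 : Ioc a t₁ ⊆ Ioc a t₂ := Ioc_subset_Ioc_right h12
  have sub2 : Ioc t₁ t₂ ⊆ Ioc a t₂ := Ioc_subset_Ioc_left h1
  have hgM₁ := ae_restrict_of_ae_restrict_of_subset sub1 hgM
  have hgM₂ := ae_restrict_of_ae_restrict_of_subset sub2 hgM
  have int₁ := intervalIntegrable_sub_rpow_mul hα0 h1 h12 (hg.mono_set sub1) hgM₁
  have int₁' := intervalIntegrable_sub_rpow_mul hα0 h1 le_rfl (hg.mono_set sub1) hgM₁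
  have int₂ := intervalIntegrable_sub_rpow_mul hα0 h12 le_rfl (hg.mono_set sub2) hgM₂
  have hfar := abs_integral_sub_rpow_sub_mul_le hα0 hα1 hM h1 h12 hgM₁
  have hnear : |∫ τ in t₁..t₂, (t₂ - τ) ^ (α - 1) * g τ| ≤ M * (t₂ - t₁) ^ α / α := by
    simpa [Real.zero_rpow hα0.ne'] using abs_integral_sub_rpow_mul_le hα0 h12 le_rfl hgM₂
  simp only [sub_mul] at hfar
  rw [intervalIntegral.integral_sub int₁ int₁'] at hfar
  rw [← intervalIntegral.integral_add_adjacent_intervals int₁ int₂]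
  calc _ = |((∫ τ in a..t₁, (t₂ - τ) ^ (α - 1) * g τ)
          - ∫ τ in a..t₁, (t₁ - τ) ^ (α - 1) * g τ)
        + ∫ τ in t₁..t₂, (t₂ - τ) ^ (α - 1) * g τ| := by ring_nf
    _ ≤ _ := (abs_add_le _ _).trans (add_le_add hfar hnear)
    _ = _ := by ring

lemma continuousOn_integral_sub_rpow_mul (hα0 : 0 < α) (hα1 : α ≤ 1) (hM : 0 ≤ M) {b : ℝ}
    (hg : AEStronglyMeasurable g (volume.restrict (Ioc a b)))
    (hgM : ∀ᵐ τ ∂volume.restrict (Ioc a b), |g τ| ≤ M) :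
    ContinuousOn (fun t => ∫ τ in a..t, (t - τ) ^ (α - 1) * g τ) (Icc a b) := by
  intro t ht
  have hdist : ∀ s ∈ Icc a b, dist (∫ τ in a..s, (s - τ) ^ (α - 1) * g τ)
      (∫ τ in a..t, (t - τ) ^ (α - 1) * g τ) ≤ 2 * M * |s - t| ^ α / α := by
    intro s hs
    have holder : ∀ {t₁ t₂}, t₁ ∈ Icc a b → t₂ ∈ Icc a b → t₁ ≤ t₂ → _ :=
      fun {t₁ t₂} h₁ h₂ h₁₂ => abs_integral_sub_rpow_mul_sub_le hα0 hα1 hM h₁.1 h₁₂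
        (hg.mono_set (Ioc_subset_Ioc_right h₂.2))
        (ae_restrict_of_ae_restrict_of_subset (Ioc_subset_Ioc_right h₂.2) hgM)
    rcases le_total s t with hst | hts
    · rw [dist_comm, Real.dist_eq, abs_sub_comm s, abs_of_nonneg (sub_nonneg.2 hst)]
      exact holder hs ht hst
    · rw [Real.dist_eq, abs_of_nonneg (sub_nonneg.2 hts)]
      exact holder ht hs hts
  have hlim : Tendsto (fun s => 2 * M * |s - t| ^ α / α) (𝓝[Icc a b] t) (𝓝 0) := by
    have : Continuous (fun s => 2 * M * |s - t| ^ α / α) := by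
      have := Real.continuous_rpow_const hα0.le
      fun_prop
    simpa [Real.zero_rpow hα0.ne'] using (this.tendsto t).mono_left nhdsWithin_le_nhds
  rw [ContinuousWithinAt, tendsto_iff_dist_tendsto_zero]
  exact squeeze_zero' (Eventually.of_forall fun s => dist_nonneg)
    (eventually_nhdsWithin_of_forall hdist) hlim

end Holder

section RiemannLiouville

variable {a α t M : ℝ} {g : ℝ → ℝ}

lemma rlInt_of_ne_zero (hα : α ≠ 0) (g : ℝ → ℝ) (t : ℝ) :
    rlInt a α g t = (1 / Real.Gamma α) * ∫ τ in a..t, (t - τ) ^ (α - 1) * g τ :=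
  if_neg hα

lemma rlInt_self (hα : α ≠ 0) (g : ℝ → ℝ) : rlInt a α g a = 0 := by
  simp [rlInt_of_ne_zero hα]

lemma rlInt_sub (hα : α ≠ 0) {g₁ g₂ : ℝ → ℝ}
    (h₁ : IntervalIntegrable (fun τ => (t - τ) ^ (α - 1) * g₁ τ) volume a t)
    (h₂ : IntervalIntegrable (fun τ => (t - τ) ^ (α - 1) * g₂ τ) volume a t) :
    rlInt a α (fun τ => g₁ τ - g₂ τ) t = rlInt a α g₁ t - rlInt a α g₂ t := by
  simp only [rlInt_of_ne_zero hα, mul_sub, intervalIntegral.integral_sub h₁ h₂]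

lemma abs_rlInt_le (hα : 0 < α) (hat : a ≤ t)
    (hgM : ∀ᵐ τ ∂volume.restrict (Ioc a t), |g τ| ≤ M) :
    |rlInt a α g t| ≤ M * (t - a) ^ α / Real.Gamma (α + 1) := by
  have hΓ := Real.Gamma_pos_of_pos hα
  have hI := abs_integral_sub_rpow_mul_le hα hat le_rfl hgM
  rw [sub_self, Real.zero_rpow hα.ne', sub_zero] at hI
  rw [rlInt_of_ne_zero hα.ne', abs_mul, abs_of_pos (one_div_pos.2 hΓ),
    Real.Gamma_add_one hα.ne']
  calc 1 / Real.Gamma α * |∫ τ in a..t, (t - τ) ^ (α - 1) * g τ|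
      ≤ 1 / Real.Gamma α * (M * (t - a) ^ α / α) := by gcongr
    _ = M * (t - a) ^ α / (α * Real.Gamma α) := by field_simp

lemma continuousOn_rlInt (hα0 : 0 < α) (hα1 : α ≤ 1) (hM : 0 ≤ M) {b : ℝ}
    (hg : AEStronglyMeasurable g (volume.restrict (Ioc a b)))
    (hgM : ∀ᵐ τ ∂volume.restrict (Ioc a b), |g τ| ≤ M) :
    ContinuousOn (rlInt a α g) (Icc a b) :=
  (continuousOn_const.mul (continuousOn_integral_sub_rpow_mul hα0 hα1 hM hg hgM)).congr
    fun t _ => rlInt_of_ne_zero hα0.ne' g t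

end RiemannLiouville

section Caratheodory

variable {T X β : Type*} [MeasurableSpace T] {μ : Measure T}

lemma ae_forall_mem_of_isClosed [TopologicalSpace X] {s : Set X}
    [TopologicalSpace.SeparableSpace s] {p : X → T → Prop}
    (hp : ∀ x ∈ s, ∀ᵐ t ∂μ, p x t) (hclosed : ∀ᵐ t ∂μ, IsClosed {x : s | p x t}) :
    ∀ᵐ t ∂μ, ∀ x ∈ s, p x t := by
  obtain ⟨D, hDc, hD⟩ := TopologicalSpace.exists_countable_dense s
  have hDae : ∀ᵐ t ∂μ, ∀ x ∈ D, p x t := (ae_ball_iff hDc).2 fun x _ => hp x x.2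
  filter_upwards [hDae, hclosed] with t hDt hct x hx
  have hxD : (⟨x, hx⟩ : s) ∈ closure D := hD.closure_eq ▸ mem_univ _
  exact closure_minimal hDt hct hxD

section Normed

variable [SeminormedAddCommGroup X] [SeminormedAddCommGroup β] {s : Set X} {F : X → T → β}

lemma ae_forall_norm_le_of_continuousOn [TopologicalSpace.SeparableSpace s] {M : ℝ}
    (hFcont : ∀ᵐ t ∂μ, ContinuousOn (fun x => F x t) s)
    (hM : ∀ x ∈ s, ∀ᵐ t ∂μ, ‖F x t‖ ≤ M) :
    ∀ᵐ t ∂μ, ∀ x ∈ s, ‖F x t‖ ≤ M :=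
  ae_forall_mem_of_isClosed (p := fun x t => ‖F x t‖ ≤ M) hM <|
    hFcont.mono fun _ ht => isClosed_le ht.domRestrict.norm continuous_const

lemma ae_forall_lipschitz_of_continuousOn [TopologicalSpace.SeparableSpace (s ×ˢ s)] {L : ℝ}
    (hFcont : ∀ᵐ t ∂μ, ContinuousOn (fun x => F x t) s)
    (hL : ∀ x₁ ∈ s, ∀ x₂ ∈ s, ∀ᵐ t ∂μ, ‖F x₂ t - F x₁ t‖ ≤ L * ‖x₂ - x₁‖) :
    ∀ᵐ t ∂μ, ∀ x₁ ∈ s, ∀ x₂ ∈ s, ‖F x₂ t - F x₁ t‖ ≤ L * ‖x₂ - x₁‖ := by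
  have hpairs := ae_forall_mem_of_isClosed (s := s ×ˢ s)
    (p := fun x t => ‖F x.2 t - F x.1 t‖ ≤ L * ‖x.2 - x.1‖) (fun x hx => hL _ hx.1 _ hx.2) <|
    hFcont.mono fun _ ht => by
      have h₁ := ht.comp_continuous (continuous_fst.comp continuous_subtype_val)
        fun x : ↥(s ×ˢ s) => x.2.1
      have h₂ := ht.comp_continuous (continuous_snd.comp continuous_subtype_val)
        fun x : ↥(s ×ˢ s) => x.2.2
      exact isClosed_le (h₂.sub h₁).norm (continuous_const.mul (by fun_prop))
  exact hpairs.mono fun t ht x₁ hx₁ x₂ hx₂ => ht (x₁, x₂) ⟨hx₁, hx₂⟩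

end Normed

variable [TopologicalSpace β] [AddCommMonoid β] [ContinuousAdd β]

lemma aestronglyMeasurable_simpleFunc_apply {F : X → T → β} (φ : SimpleFunc T X)
    (hF : ∀ x ∈ range φ, AEStronglyMeasurable (F x) μ) :
    AEStronglyMeasurable (fun t => F (φ t) t) μ := by
  classical
  have hsum : (fun t => F (φ t) t) = ∑ x ∈ φ.range, (φ ⁻¹' {x}).indicator (F x) := by
    ext t
    rw [Finset.sum_apply, Finset.sum_eq_single (φ t)]
    · simp
    · intro x _ hx
      exact indicator_of_notMem (fun h => hx h.symm) _
    · exact fun h => absurd (φ.mem_range_self t) h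
  rw [hsum]
  exact Finset.aestronglyMeasurable_sum _ fun x hx =>
    (hF x (φ.mem_range.1 hx)).indicator (φ.measurableSet_fiber x)

lemma aestronglyMeasurable_comp_of_caratheodory [TopologicalSpace.PseudoMetrizableSpace β]
    [PseudoEMetricSpace X] [MeasurableSpace X] [OpensMeasurableSpace X]
    {Ω : Set X} [TopologicalSpace.SeparableSpace Ω] {F : X → T → β}
    (hFmeas : ∀ x ∈ Ω, AEStronglyMeasurable (F x) μ)
    (hFcont : ∀ᵐ t ∂μ, ContinuousOn (fun x => F x t) Ω)
    {q : T → X} (hq : Measurable q) (hqΩ : ∀ᵐ t ∂μ, q t ∈ Ω) :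
    AEStronglyMeasurable (fun t => F (q t) t) μ := by
  rcases Ω.eq_empty_or_nonempty with rfl | ⟨y₀, hy₀⟩
  · have : μ = 0 := ae_eq_bot.1 (by simpa using hqΩ)
    exact this ▸ aestronglyMeasurable_zero_measure _
  set φ := SimpleFunc.approxOn q hq Ω y₀ hy₀
  refine aestronglyMeasurable_of_tendsto_ae atTop (f := fun n t => F (φ n t) t)
    (fun n => aestronglyMeasurable_simpleFunc_apply _ ?_) ?_
  · rintro _ ⟨t, rfl⟩
    exact hFmeas _ (SimpleFunc.approxOn_mem hq hy₀ n t)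
  filter_upwards [hFcont, hqΩ] with t hct hqt
  refine (hct _ hqt).tendsto.comp (tendsto_nhdsWithin_iff.2 ⟨?_, ?_⟩)
  · exact SimpleFunc.tendsto_approxOn hq hy₀ (subset_closure hqt)
  · exact Eventually.of_forall fun n => SimpleFunc.approxOn_mem hq hy₀ n t

end Caratheodory

lemma EuclideanSpace.norm_le_sum_abs {ι : Type*} [Fintype ι] (x : EuclideanSpace ℝ ι) :
    ‖x‖ ≤ ∑ i, |x i| := by
  rw [EuclideanSpace.norm_eq, Real.sqrt_le_left (by positivity)]
  simpa only [Real.norm_eq_abs, sq_abs] using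
    Finset.sum_sq_le_sq_sum_of_nonneg fun i _ => abs_nonneg (x i)

section CaputoPicard

variable {ι : Type*} {a b M : ℝ} {α : ι → ℝ} {qa : EuclideanSpace ℝ ι}
  {F : EuclideanSpace ℝ ι → ℝ → EuclideanSpace ℝ ι} {w : ℝ → EuclideanSpace ℝ ι}

noncomputable def caputoPicard (a : ℝ) (α : ι → ℝ) (qa : EuclideanSpace ℝ ι)
    (F : EuclideanSpace ℝ ι → ℝ → EuclideanSpace ℝ ι) (w : ℝ → EuclideanSpace ℝ ι) (t : ℝ) :
    EuclideanSpace ℝ ι :=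
  WithLp.toLp 2 fun i => qa i + rlInt a (α i) (fun τ => F (w τ) τ i) t

@[simp]
lemma caputoPicard_apply (w : ℝ → EuclideanSpace ℝ ι) (t : ℝ) (i : ι) :
    caputoPicard a α qa F w t i = qa i + rlInt a (α i) (fun τ => F (w τ) τ i) t :=
  rfl

lemma aestronglyMeasurable_apply_Ioc {t : ℝ} (ht : t ∈ Icc a b)
    (hw : AEStronglyMeasurable (fun τ => F (w τ) τ) (volume.restrict (Icc a b))) (i : ι) :
    AEStronglyMeasurable (fun τ => F (w τ) τ i) (volume.restrict (Ioc a t)) :=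
  ((PiLp.continuous_apply 2 _ i).comp_aestronglyMeasurable hw).mono_set
    (Ioc_subset_Icc_self.trans (Icc_subset_Icc_right ht.2))

variable [Fintype ι]

/-- Each summand is the fractional integral `I^{α i}_{a+}[1]` at `a + s`. -/
noncomputable def rlIntOneSum (α : ι → ℝ) (s : ℝ) : ℝ :=
  ∑ i, s ^ α i / Real.Gamma (α i + 1)

lemma tendsto_rlIntOneSum (hα : ∀ i, 0 < α i) : Tendsto (rlIntOneSum α) (𝓝 0) (𝓝 0) := by
  have hcont : Continuous (rlIntOneSum α) := by
    have := fun i => Real.continuous_rpow_const (hα i).le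
    unfold rlIntOneSum
    fun_prop
  simpa [rlIntOneSum, fun i => Real.zero_rpow (hα i).ne'] using hcont.tendsto 0

lemma rlIntOneSum_nonneg (hα : ∀ i, 0 < α i) {s : ℝ} (hs : 0 ≤ s) : 0 ≤ rlIntOneSum α s :=
  Finset.sum_nonneg fun i _ =>
    div_nonneg (Real.rpow_nonneg hs _) (Real.Gamma_pos_of_pos (by linarith [hα i])).le

lemma norm_le_mul_rlIntOneSum {x : EuclideanSpace ℝ ι} {C s s' : ℝ} (hα : ∀ i, 0 < α i)
    (hC : 0 ≤ C) (hs : 0 ≤ s) (hss' : s ≤ s')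
    (hx : ∀ i, |x i| ≤ C * s ^ α i / Real.Gamma (α i + 1)) :
    ‖x‖ ≤ C * rlIntOneSum α s' := by
  refine (EuclideanSpace.norm_le_sum_abs x).trans ?_
  rw [rlIntOneSum, Finset.mul_sum]
  refine Finset.sum_le_sum fun i _ => (hx i).trans ?_
  have hΓ := Real.Gamma_pos_of_pos (by linarith [hα i] : 0 < α i + 1)
  rw [mul_div_assoc]
  gcongr
  exact (hα i).le

lemma ae_abs_apply_le_Ioc {t : ℝ} (ht : t ∈ Icc a b) {g : ℝ → EuclideanSpace ℝ ι} {C : ℝ}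
    (hg : ∀ᵐ τ ∂volume.restrict (Icc a b), ‖g τ‖ ≤ C) (i : ι) :
    ∀ᵐ τ ∂volume.restrict (Ioc a t), |g τ i| ≤ C :=
  ae_restrict_of_ae_restrict_of_subset (Ioc_subset_Icc_self.trans (Icc_subset_Icc_right ht.2))
    (hg.mono fun τ h => (Real.norm_eq_abs _ ▸ PiLp.norm_apply_le (g τ) i).trans h)

lemma continuousOn_caputoPicard (hα : ∀ i, 0 < α i ∧ α i ≤ 1) (hM : 0 ≤ M)
    (hw : AEStronglyMeasurable (fun τ => F (w τ) τ) (volume.restrict (Icc a b)))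
    (hwM : ∀ᵐ τ ∂volume.restrict (Icc a b), ‖F (w τ) τ‖ ≤ M) :
    ContinuousOn (caputoPicard a α qa F w) (Icc a b) := by
  rcases lt_or_ge b a with hba | hab
  · simp [Icc_eq_empty_of_lt hba]
  have hb : b ∈ Icc a b := right_mem_Icc.2 hab
  refine (PiLp.continuous_toLp 2 _).comp_continuousOn (continuousOn_pi.2 fun i =>
    continuousOn_const.add ?_)
  exact continuousOn_rlInt (hα i).1 (hα i).2 hM (aestronglyMeasurable_apply_Ioc hb hw i)
    (ae_abs_apply_le_Ioc hb hwM i)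

lemma norm_caputoPicard_sub_le (hα : ∀ i, 0 < α i) (hM : 0 ≤ M) {t : ℝ} (ht : t ∈ Icc a b)
    (hwM : ∀ᵐ τ ∂volume.restrict (Icc a b), ‖F (w τ) τ‖ ≤ M) :
    ‖caputoPicard a α qa F w t - qa‖ ≤ M * rlIntOneSum α (b - a) := by
  refine norm_le_mul_rlIntOneSum hα hM (sub_nonneg.2 ht.1) (by linarith [ht.2]) fun i => ?_
  simpa using abs_rlInt_le (hα i) ht.1 (ae_abs_apply_le_Ioc ht hwM i)

lemma norm_caputoPicard_sub_caputoPicard_le (hα : ∀ i, 0 < α i) {t K : ℝ} (ht : t ∈ Icc a b)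
    (hK : 0 ≤ K) {v : ℝ → EuclideanSpace ℝ ι}
    (hw : AEStronglyMeasurable (fun τ => F (w τ) τ) (volume.restrict (Icc a b)))
    (hwM : ∀ᵐ τ ∂volume.restrict (Icc a b), ‖F (w τ) τ‖ ≤ M)
    (hv : AEStronglyMeasurable (fun τ => F (v τ) τ) (volume.restrict (Icc a b)))
    (hvM : ∀ᵐ τ ∂volume.restrict (Icc a b), ‖F (v τ) τ‖ ≤ M)
    (hwv : ∀ᵐ τ ∂volume.restrict (Icc a b), ‖F (w τ) τ - F (v τ) τ‖ ≤ K) :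
    ‖caputoPicard a α qa F w t - caputoPicard a α qa F v t‖ ≤ K * rlIntOneSum α (b - a) := by
  refine norm_le_mul_rlIntOneSum hα hK (sub_nonneg.2 ht.1) (by linarith [ht.2]) fun i => ?_
  have hsub := rlInt_sub (hα i).ne'
    (intervalIntegrable_sub_rpow_mul (hα i) ht.1 le_rfl (aestronglyMeasurable_apply_Ioc ht hw i)
      (ae_abs_apply_le_Ioc ht hwM i))
    (intervalIntegrable_sub_rpow_mul (hα i) ht.1 le_rfl (aestronglyMeasurable_apply_Ioc ht hv i)
      (ae_abs_apply_le_Ioc ht hvM i))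
  have := abs_rlInt_le (hα i) ht.1 (ae_abs_apply_le_Ioc ht hwv i)
  simp only [PiLp.sub_apply] at this
  simpa [hsub] using this

end CaputoPicard

section FixedPoint

variable {ι : Type*} [Fintype ι] {a b R M L : ℝ} {α : ι → ℝ} {qa : EuclideanSpace ℝ ι}
  {F : EuclideanSpace ℝ ι → ℝ → EuclideanSpace ℝ ι} {w v : ℝ → EuclideanSpace ℝ ι}

lemma caputoPicard_mem_closedBall (hα : ∀ i, 0 < α i) (hM : 0 ≤ M)
    (hbound : ∀ᵐ τ ∂volume.restrict (Icc a b), ∀ x ∈ Metric.closedBall qa R, ‖F x τ‖ ≤ M)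
    (hMR : M * rlIntOneSum α (b - a) ≤ R) (hwB : ∀ τ, w τ ∈ Metric.closedBall qa R)
    {t : ℝ} (ht : t ∈ Icc a b) :
    caputoPicard a α qa F w t ∈ Metric.closedBall qa R := by
  rw [Metric.mem_closedBall, dist_eq_norm]
  exact (norm_caputoPicard_sub_le hα hM ht (hbound.mono fun τ h => h _ (hwB τ))).trans hMR

lemma norm_caputoPicard_sub_caputoPicard_le_of_lipschitz (hα : ∀ i, 0 < α i) (hL : 0 ≤ L)
    (hbound : ∀ᵐ τ ∂volume.restrict (Icc a b), ∀ x ∈ Metric.closedBall qa R, ‖F x τ‖ ≤ M)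
    (hlip : ∀ᵐ τ ∂volume.restrict (Icc a b), ∀ x₁ ∈ Metric.closedBall qa R,
      ∀ x₂ ∈ Metric.closedBall qa R, ‖F x₂ τ - F x₁ τ‖ ≤ L * ‖x₂ - x₁‖)
    (hw : AEStronglyMeasurable (fun τ => F (w τ) τ) (volume.restrict (Icc a b)))
    (hv : AEStronglyMeasurable (fun τ => F (v τ) τ) (volume.restrict (Icc a b)))
    (hwB : ∀ τ, w τ ∈ Metric.closedBall qa R) (hvB : ∀ τ, v τ ∈ Metric.closedBall qa R)
    {D : ℝ} (hD : ∀ τ, ‖w τ - v τ‖ ≤ D) {t : ℝ} (ht : t ∈ Icc a b) :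
    ‖caputoPicard a α qa F w t - caputoPicard a α qa F v t‖
      ≤ L * D * rlIntOneSum α (b - a) := by
  have hD0 : 0 ≤ D := (norm_nonneg _).trans (hD a)
  refine norm_caputoPicard_sub_caputoPicard_le hα ht (mul_nonneg hL hD0) hw
    (hbound.mono fun τ h => h _ (hwB τ)) hv (hbound.mono fun τ h => h _ (hvB τ)) ?_
  filter_upwards [hlip] with τ hτ
  exact (hτ _ (hvB τ) _ (hwB τ)).trans (mul_le_mul_of_nonneg_left (hD τ) hL)

theorem exists_eqOn_caputoPicard (hab : a ≤ b) (hα : ∀ i, 0 < α i ∧ α i ≤ 1)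
    (hR : 0 ≤ R) (hM : 0 ≤ M) (hL : 0 ≤ L)
    (hmeas : ∀ w : ℝ → EuclideanSpace ℝ ι, Continuous w → (∀ τ, w τ ∈ Metric.closedBall qa R) →
      AEStronglyMeasurable (fun τ => F (w τ) τ) (volume.restrict (Icc a b)))
    (hbound : ∀ᵐ τ ∂volume.restrict (Icc a b), ∀ x ∈ Metric.closedBall qa R, ‖F x τ‖ ≤ M)
    (hlip : ∀ᵐ τ ∂volume.restrict (Icc a b), ∀ x₁ ∈ Metric.closedBall qa R,
      ∀ x₂ ∈ Metric.closedBall qa R, ‖F x₂ τ - F x₁ τ‖ ≤ L * ‖x₂ - x₁‖)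
    (hMR : M * rlIntOneSum α (b - a) ≤ R) (hLS : L * rlIntOneSum α (b - a) < 1) :
    ∃ q : ℝ → EuclideanSpace ℝ ι, Continuous q ∧ (∀ t, q t ∈ Metric.closedBall qa R) ∧
      EqOn q (caputoPicard a α qa F q) (Icc a b) := by
  have hαpos : ∀ i, 0 < α i := fun i => (hα i).1
  set B := Metric.closedBall qa R
  let curve : C(Icc a b, B) → ℝ → EuclideanSpace ℝ ι := fun u τ =>
    ((IccExtend hab u τ : B) : EuclideanSpace ℝ ι)
  have curve_cont : ∀ u, Continuous (curve u) := fun u =>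
    continuous_subtype_val.comp (ContinuousMap.IccExtend hab u).continuous
  have curve_mem : ∀ u τ, curve u τ ∈ B := fun u τ => (IccExtend hab u τ).2
  have curve_meas := fun u => hmeas _ (curve_cont u) (curve_mem u)
  let T : C(Icc a b, B) → C(Icc a b, B) := fun u =>
    ⟨fun t => ⟨caputoPicard a α qa F (curve u) t,
        caputoPicard_mem_closedBall hαpos hM hbound hMR (curve_mem u) t.2⟩,
      (continuousOn_caputoPicard hα hM (curve_meas u)
        (hbound.mono fun τ h => h _ (curve_mem u τ))).domRestrict.subtype_mk _⟩
  have hS := rlIntOneSum_nonneg hαpos (sub_nonneg.2 hab)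
  have hT : ContractingWith (L * rlIntOneSum α (b - a)).toNNReal T := by
    refine ⟨Real.toNNReal_lt_one.2 hLS, LipschitzWith.of_dist_le_mul fun u v => ?_⟩
    rw [Real.coe_toNNReal _ (mul_nonneg hL hS), ContinuousMap.dist_le (by positivity)]
    intro t
    rw [Subtype.dist_eq, dist_eq_norm, mul_right_comm]
    refine norm_caputoPicard_sub_caputoPicard_le_of_lipschitz hαpos hL hbound hlip
      (curve_meas u) (curve_meas v) (curve_mem u) (curve_mem v) (fun τ => ?_) t.2
    rw [← dist_eq_norm, ← Subtype.dist_eq]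
    exact ContinuousMap.dist_apply_le_dist _
  have : Nonempty C(Icc a b, B) := ⟨ContinuousMap.const _ ⟨qa, Metric.mem_closedBall_self hR⟩⟩
  set u := ContractingWith.fixedPoint T hT
  refine ⟨curve u, curve_cont u, curve_mem u, fun t ht => ?_⟩
  calc curve u t = T u ⟨t, ht⟩ := by
        rw [hT.fixedPoint_isFixedPt]
        exact congrArg Subtype.val (IccExtend_of_mem hab u ht)
    _ = _ := rfl

lemma exists_pos_mul_rlIntOneSum_lt (hα : ∀ i, 0 < α i) {c : ℝ} (hc : 0 < c) (hR : 0 < R) :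
    ∃ ε > 0, ε ≤ c ∧ M * rlIntOneSum α ε ≤ R ∧ L * rlIntOneSum α ε < 1 := by
  have hsmall := tendsto_rlIntOneSum hα
  have hev : ∀ᶠ ε in 𝓝[>] (0 : ℝ), (ε < c ∧ M * rlIntOneSum α ε < R ∧
      L * rlIntOneSum α ε < 1) ∧ 0 < ε :=
    (((eventually_lt_nhds hc).and
      (((hsmall.const_mul M).eventually_lt_const (by simpa using hR)).and
        ((hsmall.const_mul L).eventually_lt_const (by simp)))).filter_mono
      nhdsWithin_le_nhds).and self_mem_nhdsWithin
  obtain ⟨ε, ⟨hεc, hεM, hεL⟩, hε⟩ := hev.exists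
  exact ⟨ε, hε, hεc.le, hεM.le, hεL⟩

theorem exists_eqOn_caputoPicard_of_caratheodory (hab : a < b) (hα : ∀ i, 0 < α i ∧ α i ≤ 1)
    (hR : 0 < R) (hM : 0 ≤ M) (hL : 0 ≤ L)
    (hFmeas : ∀ x ∈ Metric.closedBall qa R, AEStronglyMeasurable (F x) (volume.restrict (Icc a b)))
    (hFcont : ∀ᵐ t ∂volume.restrict (Icc a b),
      ContinuousOn (fun x => F x t) (Metric.closedBall qa R))
    (hbound : ∀ x ∈ Metric.closedBall qa R, ∀ᵐ t ∂volume.restrict (Icc a b), ‖F x t‖ ≤ M)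
    (hlip : ∀ x₁ ∈ Metric.closedBall qa R, ∀ x₂ ∈ Metric.closedBall qa R,
      ∀ᵐ t ∂volume.restrict (Icc a b), ‖F x₂ t - F x₁ t‖ ≤ L * ‖x₂ - x₁‖) :
    ∃ ε > 0, ε ≤ b - a ∧ ∃ q : ℝ → EuclideanSpace ℝ ι, Continuous q ∧
      (∀ t, q t ∈ Metric.closedBall qa R) ∧ EqOn q (caputoPicard a α qa F q) (Icc a (a + ε)) := by
  obtain ⟨ε, hε, hεb, hεM, hεL⟩ :=
    exists_pos_mul_rlIntOneSum_lt (M := M) (L := L) (fun i => (hα i).1) (sub_pos.2 hab) hR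
  have hsub : Icc a (a + ε) ⊆ Icc a b := Icc_subset_Icc_right (by linarith)
  refine ⟨ε, hε, hεb, exists_eqOn_caputoPicard (by linarith) hα hR.le hM hL
    (fun w hw hwB => ?_) ?_ ?_ (by simpa using hεM) (by simpa using hεL)⟩
  · exact aestronglyMeasurable_comp_of_caratheodory (fun x hx => (hFmeas x hx).mono_set hsub)
      (ae_restrict_of_ae_restrict_of_subset hsub hFcont) hw.measurable (ae_of_all _ hwB)
  · exact ae_restrict_of_ae_restrict_of_subset hsub
      (ae_forall_norm_le_of_continuousOn hFcont hbound)
  · exact ae_restrict_of_ae_restrict_of_subset hsub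
      (ae_forall_lipschitz_of_continuousOn hFcont hlip)

end FixedPoint

lemma exists_Icc_subset_of_interior_nonempty {a : ℝ} {I : Set ℝ} (haI : a ∈ I)
    (hIa : I ⊆ Ici a) (hint : (interior I).Nonempty) (hI : I.OrdConnected) :
    ∃ b > a, Icc a b ⊆ I := by
  obtain ⟨x, hx⟩ := hint
  obtain ⟨r, hr, hball⟩ := Metric.isOpen_iff.1 isOpen_interior x hx
  have hxr : x + r / 2 ∈ I := interior_subset (hball (by
    rw [Metric.mem_ball, Real.dist_eq, abs_of_pos (by linarith)]
    linarith))
  have hax : a ≤ x := hIa (interior_subset hx)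
  exact ⟨x + r / 2, by linarith, hI.out haI hxr⟩

theorem statement16_general (a : ℝ) (If : Set ℝ)
    (haI : a ∈ If) (hIsub : If ⊆ Set.Ici a) (hIint : (interior If).Nonempty)
    (hIord : If.OrdConnected)
    (m : ℕ) (Ω : Set (EuclideanSpace ℝ (Fin m)))
    (α : Fin m → ℝ) (hα : ∀ i, 0 < α i ∧ α i ≤ 1)
    (qa : EuclideanSpace ℝ (Fin m)) (hqa : qa ∈ Ω)
    (F : EuclideanSpace ℝ (Fin m) → ℝ → EuclideanSpace ℝ (Fin m))
    -- Carathéodory assumptions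
    (hFmeas : ∀ x ∈ Ω, MeasureTheory.AEStronglyMeasurable (fun t => F x t)
      (MeasureTheory.volume.restrict If))
    (hFcont : ∀ᵐ t ∂(MeasureTheory.volume.restrict If), ContinuousOn (fun x => F x t) Ω)
    -- `F` is bounded on compacts
    (hbdd : ∀ K : Set (EuclideanSpace ℝ (Fin m)), K ⊆ Ω → IsCompact K →
      ∀ c ∈ If, ∀ d ∈ If, c ≤ d → ∃ M : ℝ, 0 ≤ M ∧ ∀ x ∈ K,
        ∀ᵐ t ∂(MeasureTheory.volume.restrict (Set.Icc c d)), ‖F x t‖ ≤ M)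
    -- `F` is locally Lipschitz continuous in its first variable
    (hlip : ∀ x ∈ Ω, ∀ t ∈ If, ∃ R > (0:ℝ), ∃ δ > (0:ℝ), ∃ L : ℝ, 0 ≤ L ∧
      Metric.closedBall x R ⊆ Ω ∧
      ∀ x₁ ∈ Metric.closedBall x R, ∀ x₂ ∈ Metric.closedBall x R,
        ∀ᵐ τ ∂(MeasureTheory.volume.restrict (Set.Icc (t - δ) (t + δ) ∩ If)),
          ‖F x₂ τ - F x₁ τ‖ ≤ L * ‖x₂ - x₁‖) :
    ∃ ε > (0:ℝ), Set.Icc a (a + ε) ⊆ If ∧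
      ∃ q : ℝ → EuclideanSpace ℝ (Fin m),
        ContinuousOn q (Set.Icc a (a + ε)) ∧
        (∀ t ∈ Set.Icc a (a + ε), q t ∈ Ω) ∧ q a = qa ∧
        ∀ t ∈ Set.Icc a (a + ε), ∀ i,
          q t i = qa i
            + (1 / Real.Gamma (α i)) * ∫ τ in a..t, (t - τ) ^ (α i - 1) * F (q τ) τ i := by
  obtain ⟨b₀, hab₀, hIcc₀⟩ := exists_Icc_subset_of_interior_nonempty haI hIsub hIint hIord
  obtain ⟨R, hR, δ, hδ, L, hL, hBΩ, hlipB⟩ := hlip qa hqa a haI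
  set b₁ := min b₀ (a + δ)
  have hab₁ : a < b₁ := lt_min hab₀ (by linarith)
  have hIcc₁ : Icc a b₁ ⊆ If := (Icc_subset_Icc_right (min_le_left _ _)).trans hIcc₀
  have hIccδ : Icc a b₁ ⊆ Icc (a - δ) (a + δ) ∩ If :=
    fun t ht => ⟨⟨by linarith [ht.1], ht.2.trans (min_le_right _ _)⟩, hIcc₁ ht⟩
  obtain ⟨M, hM, hMB⟩ := hbdd _ hBΩ (isCompact_closedBall qa R) a haI b₁
    (hIcc₁ (right_mem_Icc.2 hab₁.le)) hab₁.le
  obtain ⟨ε, hε, hεb, q, hq, hqB, hqP⟩ := exists_eqOn_caputoPicard_of_caratheodory hab₁ hα hR hM hL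
    (fun x hx => (hFmeas x (hBΩ hx)).mono_set hIcc₁)
    ((ae_restrict_of_ae_restrict_of_subset hIcc₁ hFcont).mono fun _ h => h.mono hBΩ) hMB
    fun x₁ h₁ x₂ h₂ => ae_restrict_of_ae_restrict_of_subset hIccδ (hlipB x₁ h₁ x₂ h₂)
  refine ⟨ε, hε, (Icc_subset_Icc_right (by linarith)).trans hIcc₁, q, hq.continuousOn,
    fun t _ => hBΩ (hqB t), ?_, fun t ht i => ?_⟩
  · rw [hqP (left_mem_Icc.2 (by linarith))]
    ext i
    simp [rlInt_self (hα i).1.ne']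
  · rw [hqP ht, caputoPicard_apply, rlInt_of_ne_zero (hα i).1.ne']

theorem statement16 (a : ℝ) (If : Set ℝ)
    (haI : a ∈ If) (hIsub : If ⊆ Set.Ici a) (hIint : (interior If).Nonempty)
    (hIord : If.OrdConnected)
    (m : ℕ) (hm : 0 < m) (Ω : Set (EuclideanSpace ℝ (Fin m)))
    (hΩopen : IsOpen Ω) (hΩne : Ω.Nonempty)
    (α : Fin m → ℝ) (hα : ∀ i, 0 < α i ∧ α i ≤ 1)
    (qa : EuclideanSpace ℝ (Fin m)) (hqa : qa ∈ Ω)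
    (F : EuclideanSpace ℝ (Fin m) → ℝ → EuclideanSpace ℝ (Fin m))
    -- Carathéodory assumptions
    (hFmeas : ∀ x ∈ Ω, MeasureTheory.AEStronglyMeasurable (fun t => F x t)
      (MeasureTheory.volume.restrict If))
    (hFcont : ∀ᵐ t ∂(MeasureTheory.volume.restrict If), ContinuousOn (fun x => F x t) Ω)
    -- `F` is bounded on compacts
    (hbdd : ∀ K : Set (EuclideanSpace ℝ (Fin m)), K ⊆ Ω → IsCompact K →
      ∀ c ∈ If, ∀ d ∈ If, c ≤ d → ∃ M : ℝ, 0 ≤ M ∧ ∀ x ∈ K,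
        ∀ᵐ t ∂(MeasureTheory.volume.restrict (Set.Icc c d)), ‖F x t‖ ≤ M)
    -- `F` is locally Lipschitz continuous in its first variable
    (hlip : ∀ x ∈ Ω, ∀ t ∈ If, ∃ R > (0:ℝ), ∃ δ > (0:ℝ), ∃ L : ℝ, 0 ≤ L ∧
      Metric.closedBall x R ⊆ Ω ∧
      ∀ x₁ ∈ Metric.closedBall x R, ∀ x₂ ∈ Metric.closedBall x R,
        ∀ᵐ τ ∂(MeasureTheory.volume.restrict (Set.Icc (t - δ) (t + δ) ∩ If)),
          ‖F x₂ τ - F x₁ τ‖ ≤ L * ‖x₂ - x₁‖) :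
    ∃ ε > (0:ℝ), Set.Icc a (a + ε) ⊆ If ∧
      ∃ q : ℝ → EuclideanSpace ℝ (Fin m),
        ContinuousOn q (Set.Icc a (a + ε)) ∧
        (∀ t ∈ Set.Icc a (a + ε), q t ∈ Ω) ∧ q a = qa ∧
        ∀ t ∈ Set.Icc a (a + ε), ∀ i,
          q t i = qa i
            + (1 / Real.Gamma (α i)) * ∫ τ in a..t, (t - τ) ^ (α i - 1) * F (q τ) τ i :=
  statement16_general a If haI hIsub hIint hIord m Ω α hα qa hqa F hFmeas hFcont hbdd hlip
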